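/- arXiv:2506.06649 — 3 statements merged into one kernel-verified Lean document; each statement's English description precedes it below -/
import Mathlib

section
/- The softmax map on ℝ^L is (1/2)-Lipschitz from (ℝ^L, ‖·‖₂) into the probability simplex with total variation distance, i.e., for all logit vectors z₁, z₂ ∈ ℝ^L, ‖softmax(z₁) − softmax(z₂)‖_TV ≤ (1/2)‖z₁ − z₂‖₂, where ‖p − q‖_TV = (1/2)Σ_l |p(l) − q(l)|. -/
/-!
Restrict `z ↦ ∑ i, ε i * softmax z i`, with `ε` the sign vector of `softmax z₁ - softmax z₂`, to
the segment from `z₂` to `z₁`. Its value increases by `∑ i, |softmax z₁ i - softmax z₂ i|`, and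
its derivative in the direction `v = z₁ - z₂` is `∑ i, ε i * p i * (v i - 𝔼_p v)`, where `p` is the
current softmax. By Cauchy–Schwarz this is at most the `p`-standard deviation of `v`, which is at
most `‖v‖₂`; the mean value inequality concludes.
-/

noncomputable def softmax {L : ℕ} (z : Fin L → ℝ) : Fin L → ℝ :=
  fun i => Real.exp (z i) / ∑ j, Real.exp (z j)

open Finset Real

section ProbabilityWeights

variable {ι : Type*} [Fintype ι] {p : ι → ℝ}

theorem sum_mul_abs_sub_le_sqrt (hp : ∀ i, 0 ≤ p i) (hp1 : ∑ i, p i = 1) (v : ι → ℝ) (m : ℝ) :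
    ∑ i, p i * |v i - m| ≤ √(∑ i, p i * (v i - m) ^ 2) := by
  refine le_sqrt_of_sq_le ?_
  have := sum_sq_le_sum_mul_sum_of_sq_le_mul univ (fun i _ => hp i)
    (fun i _ => mul_nonneg (hp i) (sq_nonneg (v i - m)))
    (r := fun i => p i * |v i - m|) (fun i _ => by rw [mul_pow, sq_abs]; nlinarith [hp i])
  simpa [hp1] using this

theorem sum_mul_sub_mean_sq_le (hp : ∀ i, 0 ≤ p i) (hp1 : ∑ i, p i = 1) (v : ι → ℝ) :
    ∑ i, p i * (v i - ∑ j, p j * v j) ^ 2 ≤ ∑ i, v i ^ 2 := by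
  have hvar (m : ℝ) : ∑ i, p i * (v i - m) ^ 2 =
      ∑ i, p i * v i ^ 2 - 2 * m * ∑ i, p i * v i + m ^ 2 * ∑ i, p i := by
    simp only [mul_sum, ← sum_sub_distrib, ← sum_add_distrib]
    exact sum_congr rfl fun i _ => by ring
  rw [hvar, hp1]
  have hp_le_one (i : ι) : p i ≤ 1 := hp1 ▸ single_le_sum (fun j _ => hp j) (mem_univ i)
  have hmoment : ∑ i, p i * v i ^ 2 ≤ ∑ i, v i ^ 2 :=
    sum_le_sum fun i _ => mul_le_of_le_one_left (sq_nonneg _) (hp_le_one i)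
  nlinarith [sq_nonneg (∑ i, p i * v i)]

theorem abs_sum_mul_mul_sub_mean_le (hp : ∀ i, 0 ≤ p i) (hp1 : ∑ i, p i = 1) {ε : ι → ℝ}
    (hε : ∀ i, |ε i| ≤ 1) (v : ι → ℝ) :
    |∑ i, ε i * (p i * (v i - ∑ j, p j * v j))| ≤ √(∑ i, v i ^ 2) :=
  calc |∑ i, ε i * (p i * (v i - ∑ j, p j * v j))|
      ≤ ∑ i, p i * |v i - ∑ j, p j * v j| := by
        refine (abs_sum_le_sum_abs _ _).trans (sum_le_sum fun i _ => ?_)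
        rw [abs_mul, abs_mul, abs_of_nonneg (hp i)]
        exact mul_le_of_le_one_left (mul_nonneg (hp i) (abs_nonneg _)) (hε i)
    _ ≤ √(∑ i, p i * (v i - ∑ j, p j * v j) ^ 2) := sum_mul_abs_sub_le_sqrt hp hp1 v _
    _ ≤ √(∑ i, v i ^ 2) := sqrt_le_sqrt (sum_mul_sub_mean_sq_le hp hp1 v)

end ProbabilityWeights

section Softmax

variable {L : ℕ}

theorem softmax_nonneg (z : Fin L → ℝ) (i : Fin L) : 0 ≤ softmax z i :=
  div_nonneg (exp_pos _).le (sum_nonneg fun _ _ => (exp_pos _).le)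

theorem sum_softmax [Nonempty (Fin L)] (z : Fin L → ℝ) : ∑ i, softmax z i = 1 := by
  simp only [softmax, ← sum_div]
  exact div_self (sum_pos (fun j _ => exp_pos _) univ_nonempty).ne'

theorem hasDerivAt_softmax_line (a v : Fin L → ℝ) (i : Fin L) (t : ℝ) :
    HasDerivAt (fun s => softmax (fun j => a j + s * v j) i)
      (softmax (fun j => a j + t * v j) i *
        (v i - ∑ j, softmax (fun j => a j + t * v j) j * v j)) t := by
  have hexp (j : Fin L) : HasDerivAt (fun s => exp (a j + s * v j))
      (exp (a j + t * v j) * v j) t :=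
    (((hasDerivAt_id t).mul_const (v j)).const_add (a j)).exp.congr_deriv (by simp)
  have hS : 0 < ∑ j, exp (a j + t * v j) := sum_pos (fun j _ => exp_pos _) ⟨i, mem_univ i⟩
  refine ((hexp i).fun_div (HasDerivAt.fun_sum fun j _ => hexp j) hS.ne').congr_deriv ?_
  simp only [softmax, div_mul_eq_mul_div, ← sum_div]
  field_simp

theorem sum_abs_softmax_sub_le (z₁ z₂ : Fin L → ℝ) :
    ∑ i, |softmax z₁ i - softmax z₂ i| ≤ √(∑ i, (z₁ i - z₂ i) ^ 2) := by
  rcases isEmpty_or_nonempty (Fin L) with _ | _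
  · simp
  set v := fun j => z₁ j - z₂ j
  set ε := fun i => (SignType.sign (softmax z₁ i - softmax z₂ i) : ℝ)
  set φ := fun s : ℝ => ∑ i, ε i * softmax (fun j => z₂ j + s * v j) i
  have hφ' (t : ℝ) : HasDerivAt φ (∑ i, ε i * (softmax (fun j => z₂ j + t * v j) i *
      (v i - ∑ j, softmax (fun j => z₂ j + t * v j) j * v j))) t :=
    HasDerivAt.fun_sum fun i _ => (hasDerivAt_softmax_line z₂ v i t).const_mul (ε i)
  have hε (i : Fin L) : |ε i| ≤ 1 := by
    change |((SignType.sign (softmax z₁ i - softmax z₂ i) : SignType) : ℝ)| ≤ 1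
    cases SignType.sign (softmax z₁ i - softmax z₂ i) <;> simp
  have hφ : φ 1 - φ 0 = ∑ i, |softmax z₁ i - softmax z₂ i| := by
    simp only [φ, v, ε, one_mul, zero_mul, add_zero, add_sub_cancel, ← sum_sub_distrib, ← mul_sub,
      sign_mul_self]
  have := norm_image_sub_le_of_norm_deriv_le_segment_01' (fun t _ => (hφ' t).hasDerivWithinAt)
    (fun t _ => abs_sum_mul_mul_sub_mean_le (softmax_nonneg _) (sum_softmax _) hε v)
  rwa [hφ, norm_eq_abs, abs_of_nonneg (sum_nonneg fun _ _ => abs_nonneg _)] at this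

end Softmax

/-- Softmax is `(1/2)`-Lipschitz from `(ℝ^L, ‖·‖₂)` to the probability simplex with
the total variation distance `‖p - q‖_TV = (1/2) ∑ |p l - q l|`. -/
theorem stmt5 {L : ℕ} (z₁ z₂ : Fin L → ℝ) :
    (1 / 2) * ∑ l, |softmax z₁ l - softmax z₂ l| ≤
      (1 / 2) * Real.sqrt (∑ l, (z₁ l - z₂ l) ^ 2) := by
  gcongr
  exact sum_abs_softmax_sub_le z₁ z₂
end

section
/- Super-uniformity of a rank-based conformal p-value: let Z₁,…,Z_{n+1} be exchangeable real-valued random variables, and let U ~ Unif(0,1) be independent of them. Define p = ( #{i ≤ n : Z_i < Z_{n+1}} + U·(1 + #{i ≤ n : Z_i = Z_{n+1}}) ) / (n+1). Then P(p ≤ α) ≤ α for all α ∈ [0,1]; moreover p is exactly uniformly distributed on [0,1] when randomized tie-breaking is used. -/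
/-!
Write `R_j = #{i | z_i < z_j} + U * #{i | z_i = z_j}` for the randomized rank of score `j`, so
that `p = R_{n+1} / (n + 1)`. Given the scores, `R_j` is uniform on the interval
`[#{i | z_i < z_j}, #{i | z_i ≤ z_j}]`, whose length is the size of the tie class of `j`; these
intervals tile `[0, n + 1]`, each one shared by exactly as many indices as its length, so the
conditional laws of `R_1, …, R_{n+1}` add up to Lebesgue measure on `[0, n + 1]`. By
exchangeability all `R_j` have the same law, which is therefore uniform on `[0, n + 1]`.
-/

open MeasureTheory ProbabilityTheory
open scoped Classical

/-- The rank-based conformal p-value comparing the test score `Z (Fin.last n)` against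
the calibration scores `Z 0, …, Z (n-1)`, with uniform tie-breaking variable `U`. -/
noncomputable def confPValue {Ω : Type*} (n : ℕ) (Z : Fin (n + 1) → Ω → ℝ) (U : Ω → ℝ)
    (ω : Ω) : ℝ :=
  (((Finset.univ.filter fun i : Fin n => Z i.castSucc ω < Z (Fin.last n) ω).card : ℝ) +
      U ω * (1 + ((Finset.univ.filter fun i : Fin n =>
        Z i.castSucc ω = Z (Fin.last n) ω).card : ℝ))) / (n + 1)

open Finset
open scoped ENNReal

theorem sum_sub_div_eq_of_cover {ι : Type*} [Fintype ι] {a b : ι → ℕ} {N : ℕ}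
    (hab : ∀ j, a j ≤ b j) (hbN : ∀ j, b j ≤ N)
    (hcover : ∀ k < N, ∑ j with a j ≤ k ∧ k < b j, ((b j : ℝ) - a j)⁻¹ = 1) (f : ℕ → ℝ) :
    ∑ j, (f (b j) - f (a j)) / ((b j : ℝ) - a j) = f N - f 0 := by
  calc ∑ j, (f (b j) - f (a j)) / ((b j : ℝ) - a j)
      = ∑ j, ∑ k ∈ Ico (a j) (b j), (f (k + 1) - f k) * ((b j : ℝ) - a j)⁻¹ := by
        simp only [← sum_mul, sum_Ico_sub f (hab _), div_eq_mul_inv]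
    _ = ∑ k ∈ range N, ∑ j with a j ≤ k ∧ k < b j, (f (k + 1) - f k) * ((b j : ℝ) - a j)⁻¹ :=
        sum_comm' fun j k => by
          simp only [mem_univ, mem_Ico, mem_filter, mem_range, true_and]
          have := hbN j
          omega
    _ = ∑ k ∈ range N, (f (k + 1) - f k) :=
        sum_congr rfl fun k hk => by rw [← mul_sum, hcover k (mem_range.1 hk), mul_one]
    _ = f N - f 0 := sum_range_sub f N

def IsExchangeable {ι α : Type*} [MeasurableSpace α] (ν : Measure (ι → α)) : Prop :=
  ∀ π : Equiv.Perm ι, ν.map (fun z => z ∘ π) = ν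

namespace IsExchangeable

variable {ι α : Type*} [MeasurableSpace α] {ν : Measure (ι → α)}
  {f : ι → (ι → α) → ℝ≥0∞}

theorem lintegral_eq (hν : IsExchangeable ν) (hf : ∀ j, Measurable (f j))
    (hfπ : ∀ (π : Equiv.Perm ι) z j, f j (z ∘ π) = f (π j) z) (j j' : ι) :
    ∫⁻ z, f j z ∂ν = ∫⁻ z, f j' z ∂ν := by
  calc ∫⁻ z, f j z ∂ν = ∫⁻ z, f j z ∂ν.map (fun z => z ∘ Equiv.swap j' j) := by rw [hν]
    _ = ∫⁻ z, f j' z ∂ν := by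
      rw [lintegral_map (hf j) (by fun_prop)]
      simp_rw [hfπ, Equiv.swap_apply_right]

theorem card_mul_lintegral_eq [Fintype ι] (hν : IsExchangeable ν) (hf : ∀ j, Measurable (f j))
    (hfπ : ∀ (π : Equiv.Perm ι) z j, f j (z ∘ π) = f (π j) z) (j : ι) :
    Fintype.card ι * ∫⁻ z, f j z ∂ν = ∫⁻ z, ∑ j', f j' z ∂ν := by
  rw [lintegral_finsetSum _ fun j' _ => hf j', ← nsmul_eq_mul, ← card_univ, ← sum_const]
  exact sum_congr rfl fun j' _ => hν.lintegral_eq hf hfπ j j'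

end IsExchangeable

theorem restrict_Icc_setOf_add_mul_le {a b : ℝ} (hab : a < b) (β : ℝ) :
    volume.restrict (Set.Icc 0 1) {u | a + u * (b - a) ≤ β} =
      ENNReal.ofReal ((min β b - min β a) / (b - a)) := by
  have hba : 0 < b - a := sub_pos.2 hab
  have hset : {u : ℝ | a + u * (b - a) ≤ β} ∩ Set.Icc 0 1 =
      Set.Icc 0 (min ((β - a) / (b - a)) 1) := by
    ext u
    simp only [Set.mem_inter_iff, Set.mem_ofPred_eq, Set.mem_Icc, le_min_iff, le_div_iff₀ hba]
    constructor <;> rintro ⟨h₁, h₂, h₃⟩ <;> refine ⟨?_, ?_, ?_⟩ <;> linarith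
  rw [Measure.restrict_apply (measurableSet_le (by fun_prop) measurable_const), hset,
    Real.volume_Icc, sub_zero]
  rcases le_total β a with h | h
  · have ht : (β - a) / (b - a) ≤ 0 := div_nonpos_of_nonpos_of_nonneg (by linarith) hba.le
    rw [min_eq_left h, min_eq_left (h.trans hab.le), sub_self, zero_div, ENNReal.ofReal_zero,
      ENNReal.ofReal_of_nonpos ((min_le_left _ _).trans ht)]
  rcases le_total β b with h' | h'
  · rw [min_eq_left h', min_eq_right h, min_eq_left ((div_le_one hba).2 (by linarith))]
  · rw [min_eq_right h', min_eq_right h, div_self hba.ne',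
      min_eq_right ((one_le_div hba).2 (by linarith))]

theorem restrict_Icc_Iic (a : ℝ) :
    volume.restrict (Set.Icc 0 1) (Set.Iic a) = ENNReal.ofReal (min a 1 - min a 0) := by
  have h := restrict_Icc_setOf_add_mul_le zero_lt_one a
  simp only [sub_zero, zero_add, mul_one, div_one] at h
  exact h

namespace ConformalRank

variable {ι α : Type*} [Fintype ι] [LinearOrder α]

def rankLT (z : ι → α) (j : ι) : ℕ := #{i | z i < z j}

def rankLE (z : ι → α) (j : ι) : ℕ := #{i | z i ≤ z j}

theorem rankLT_add_card_eq (z : ι → α) (j : ι) :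
    rankLT z j + #{i | z i = z j} = rankLE z j := by
  rw [rankLT, rankLE, ← card_union_of_disjoint]
  · congr 1
    ext i
    simp [le_iff_lt_or_eq]
  · exact disjoint_filter.2 fun i _ h => h.ne

theorem rankLT_lt_rankLE (z : ι → α) (j : ι) : rankLT z j < rankLE z j := by
  rw [← rankLT_add_card_eq]
  exact Nat.lt_add_of_pos_right (card_pos.2 ⟨j, by simp⟩)

theorem rankLE_le_card (z : ι → α) (j : ι) : rankLE z j ≤ Fintype.card ι :=
  card_le_univ _

theorem rankLE_le_rankLT_of_lt {z : ι → α} {j j' : ι} (h : z j < z j') :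
    rankLE z j ≤ rankLT z j' :=
  card_le_card fun i hi => by
    simp only [mem_filter, mem_univ, true_and] at hi ⊢
    exact hi.trans_lt h

theorem rankLT_congr {z : ι → α} {j j' : ι} (h : z j = z j') : rankLT z j = rankLT z j' := by
  simp only [rankLT, h]

theorem rankLE_congr {z : ι → α} {j j' : ι} (h : z j = z j') : rankLE z j = rankLE z j' := by
  simp only [rankLE, h]

theorem exists_rankLT_le_lt_rankLE (z : ι → α) {k : ℕ} (hk : k < Fintype.card ι) :
    ∃ j, rankLT z j ≤ k ∧ k < rankLE z j := by
  have : Nonempty ι := Fintype.card_pos_iff.1 (by omega)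
  have hne : (univ.filter fun j => k < rankLE z j).Nonempty := by
    obtain ⟨jmax, -, hjmax⟩ := exists_max_image univ z univ_nonempty
    refine ⟨jmax, ?_⟩
    rwa [mem_filter, rankLE, filter_true_of_mem fun i _ => hjmax i (mem_univ i), card_univ,
      and_iff_right (mem_univ _)]
  obtain ⟨j, hj, hmin⟩ := exists_min_image _ z hne
  refine ⟨j, ?_, (mem_filter.1 hj).2⟩
  obtain hbelow | ⟨i, hi⟩ := (univ.filter fun i => z i < z j).eq_empty_or_nonempty
  · simp [rankLT, hbelow]
  -- the largest value below `z j` has its `rankLE` at most `k`, by minimality of `j`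
  obtain ⟨i, hi, hmax⟩ := exists_max_image _ z ⟨i, hi⟩
  have hik : rankLE z i ≤ k := by
    by_contra! h
    exact (mem_filter.1 hi).2.not_ge (hmin i (by simpa using h))
  refine le_trans (card_le_card fun l hl => ?_) hik
  simpa using hmax l hl

theorem filter_rankLT_le_lt_rankLE_eq {z : ι → α} {j₀ : ι} {k : ℕ} (h₁ : rankLT z j₀ ≤ k)
    (h₂ : k < rankLE z j₀) :
    (univ.filter fun j => rankLT z j ≤ k ∧ k < rankLE z j) = univ.filter fun j => z j = z j₀ := by
  ext j
  simp only [mem_filter, mem_univ, true_and]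
  constructor
  · rintro ⟨hj₁, hj₂⟩
    rcases lt_trichotomy (z j) (z j₀) with hlt | heq | hgt
    · have := rankLE_le_rankLT_of_lt hlt; omega
    · exact heq
    · have := rankLE_le_rankLT_of_lt hgt; omega
  · intro he
    rw [rankLT_congr he, rankLE_congr he]
    exact ⟨h₁, h₂⟩

theorem sum_inv_rankLE_sub_rankLT (z : ι → α) {k : ℕ} (hk : k < Fintype.card ι) :
    ∑ j with rankLT z j ≤ k ∧ k < rankLE z j, ((rankLE z j : ℝ) - rankLT z j)⁻¹ = 1 := by
  obtain ⟨j₀, h₁, h₂⟩ := exists_rankLT_le_lt_rankLE z hk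
  have hgap : ((rankLE z j₀ : ℝ) - rankLT z j₀) = #{j | z j = z j₀} := by
    rw [← rankLT_add_card_eq]; push_cast; ring
  rw [filter_rankLT_le_lt_rankLE_eq h₁ h₂, sum_congr rfl fun j hj => by
    rw [rankLT_congr (mem_filter.1 hj).2, rankLE_congr (mem_filter.1 hj).2], sum_const, hgap,
    nsmul_eq_mul, mul_inv_cancel₀ (by simp)]

theorem sum_min_rankLE_sub_min_rankLT_div (z : ι → α) (β : ℝ) :
    ∑ j, (min β (rankLE z j) - min β (rankLT z j)) / ((rankLE z j : ℝ) - rankLT z j) =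
      min β (Fintype.card ι) - min β 0 := by
  simpa using sum_sub_div_eq_of_cover (fun j => (rankLT_lt_rankLE z j).le) (rankLE_le_card z)
    (fun k hk => sum_inv_rankLE_sub_rankLT z hk) (fun k => min β k)

theorem card_filter_castSucc_lt_last {n : ℕ} (z : Fin (n + 1) → α) :
    #{i : Fin n | z i.castSucc < z (Fin.last n)} = rankLT z (Fin.last n) := by
  rw [rankLT, card_filter, card_filter, Fin.sum_univ_castSucc]
  simp

theorem card_filter_castSucc_eq_last_add_one {n : ℕ} (z : Fin (n + 1) → α) :
    #{i : Fin n | z i.castSucc = z (Fin.last n)} + 1 = #{i | z i = z (Fin.last n)} := by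
  rw [card_filter, card_filter, Fin.sum_univ_castSucc]
  simp

def randomizedRank (z : ι → α) (j : ι) (u : ℝ) : ℝ :=
  rankLT z j + u * ((rankLE z j : ℝ) - rankLT z j)

theorem rankLT_comp_perm (z : ι → α) (π : Equiv.Perm ι) (j : ι) :
    rankLT (z ∘ π) j = rankLT z (π j) := by
  simp only [rankLT, card_filter, Function.comp_apply]
  exact Equiv.sum_comp π fun i => if z i < z (π j) then 1 else 0

theorem rankLE_comp_perm (z : ι → α) (π : Equiv.Perm ι) (j : ι) :
    rankLE (z ∘ π) j = rankLE z (π j) := by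
  simp only [rankLE, card_filter, Function.comp_apply]
  exact Equiv.sum_comp π fun i => if z i ≤ z (π j) then 1 else 0

theorem randomizedRank_comp_perm (z : ι → α) (π : Equiv.Perm ι) (j : ι) :
    randomizedRank (z ∘ π) j = randomizedRank z (π j) := by
  funext u
  simp only [randomizedRank, rankLT_comp_perm, rankLE_comp_perm]

theorem measurable_rankLT (j : ι) : Measurable fun z : ι → ℝ => rankLT z j := by
  simp only [rankLT, card_filter]
  exact Finset.measurable_sum _ fun i _ => Measurable.ite
    (measurableSet_lt (measurable_pi_apply i) (measurable_pi_apply j)) measurable_const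
    measurable_const

theorem measurable_rankLE (j : ι) : Measurable fun z : ι → ℝ => rankLE z j := by
  simp only [rankLE, card_filter]
  exact Finset.measurable_sum _ fun i _ => Measurable.ite
    (measurableSet_le (measurable_pi_apply i) (measurable_pi_apply j)) measurable_const
    measurable_const

theorem measurable_randomizedRank (j : ι) :
    Measurable fun x : (ι → ℝ) × ℝ => randomizedRank x.1 j x.2 := by
  have hLT : Measurable fun x : (ι → ℝ) × ℝ => (rankLT x.1 j : ℝ) :=
    measurable_from_nat.comp ((measurable_rankLT j).comp measurable_fst)
  have hLE : Measurable fun x : (ι → ℝ) × ℝ => (rankLE x.1 j : ℝ) :=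
    measurable_from_nat.comp ((measurable_rankLE j).comp measurable_fst)
  exact hLT.add (measurable_snd.mul (hLE.sub hLT))

theorem prod_restrict_Icc_randomizedRank_le {ν : Measure (ι → ℝ)} [IsProbabilityMeasure ν]
    (hν : IsExchangeable ν) (j : ι) (β : ℝ) :
    (ν.prod (volume.restrict (Set.Icc 0 1))) {x | randomizedRank x.1 j x.2 ≤ β} =
      ENNReal.ofReal ((min β (Fintype.card ι) - min β 0) / Fintype.card ι) := by
  have hs : ∀ j, MeasurableSet {x : (ι → ℝ) × ℝ | randomizedRank x.1 j x.2 ≤ β} :=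
    fun j => measurableSet_le (measurable_randomizedRank j) measurable_const
  set f : ι → (ι → ℝ) → ℝ≥0∞ :=
    fun j z => volume.restrict (Set.Icc 0 1) {u | randomizedRank z j u ≤ β}
  have hf : ∀ j, Measurable (f j) := fun j => measurable_measure_prodMk_left (hs j)
  have hfπ : ∀ (π : Equiv.Perm ι) z j, f j (z ∘ π) = f (π j) z := by
    intro π z j
    simp only [f, randomizedRank_comp_perm]
  have hsum : ∀ z, ∑ j, f j z = ENNReal.ofReal (min β (Fintype.card ι) - min β 0) := by
    intro z
    have hlt : ∀ j, (rankLT z j : ℝ) < rankLE z j := fun j => by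
      exact_mod_cast rankLT_lt_rankLE z j
    simp only [f, randomizedRank, restrict_Icc_setOf_add_mul_le (hlt _)]
    rw [← ENNReal.ofReal_sum_of_nonneg fun j _ => div_nonneg
      (sub_nonneg.2 (min_le_min_left _ (hlt j).le)) (sub_nonneg.2 (hlt j).le),
      sum_min_rankLE_sub_min_rankLT_div]
  have hcard : (0 : ℝ) < Fintype.card ι := by exact_mod_cast Fintype.card_pos_iff.2 ⟨j⟩
  have hmul := hν.card_mul_lintegral_eq hf hfπ j
  simp only [hsum, lintegral_const, measure_univ, mul_one] at hmul
  rw [Measure.prod_apply (hs j), ENNReal.ofReal_div_of_pos hcard, ENNReal.ofReal_natCast,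
    ENNReal.eq_div_iff (by simpa using hcard.ne') (ENNReal.natCast_ne_top _), ← hmul]
  rfl

theorem map_randomizedRank_div_card {ν : Measure (ι → ℝ)} [IsProbabilityMeasure ν]
    (hν : IsExchangeable ν) (j : ι) :
    (ν.prod (volume.restrict (Set.Icc 0 1))).map
        (fun x => randomizedRank x.1 j x.2 / Fintype.card ι) =
      volume.restrict (Set.Icc 0 1) := by
  have hcard : (0 : ℝ) < Fintype.card ι := by exact_mod_cast Fintype.card_pos_iff.2 ⟨j⟩
  refine Measure.ext_of_Iic _ _ fun a => ?_
  rw [Measure.map_apply ((measurable_randomizedRank j).div_const _) measurableSet_Iic,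
    restrict_Icc_Iic]
  have hpre : (fun x : (ι → ℝ) × ℝ => randomizedRank x.1 j x.2 / Fintype.card ι) ⁻¹' Set.Iic a =
      {x | randomizedRank x.1 j x.2 ≤ Fintype.card ι * a} := by
    ext x
    simp [div_le_iff₀ hcard, mul_comm]
  have h₁ : min (Fintype.card ι * a) (Fintype.card ι) = Fintype.card ι * min a 1 := by
    rw [mul_min_of_nonneg _ _ hcard.le, mul_one]
  have h₀ : min (Fintype.card ι * a) 0 = Fintype.card ι * min a 0 := by
    rw [mul_min_of_nonneg _ _ hcard.le, mul_zero]
  rw [hpre, prod_restrict_Icc_randomizedRank_le hν, h₁, h₀, ← mul_sub,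
    mul_div_cancel_left₀ _ hcard.ne']

end ConformalRank

open ConformalRank

theorem confPValue_eq_randomizedRank {Ω : Type*} (n : ℕ) (Z : Fin (n + 1) → Ω → ℝ) (U : Ω → ℝ)
    (ω : Ω) :
    confPValue n Z U ω = randomizedRank (fun i => Z i ω) (Fin.last n) (U ω) / (n + 1) := by
  have hgap := congrArg (Nat.cast (R := ℝ)) (rankLT_add_card_eq (fun i => Z i ω) (Fin.last n))
  have htie := congrArg (Nat.cast (R := ℝ)) (card_filter_castSucc_eq_last_add_one fun i => Z i ω)
  have hlt := congrArg (Nat.cast (R := ℝ)) (card_filter_castSucc_lt_last fun i => Z i ω)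
  push_cast at hgap htie
  rw [confPValue, randomizedRank, hlt]
  congr 3
  linarith

/-- Super-uniformity (indeed exact uniformity) of the rank-based conformal p-value: if
`Z 0, …, Z n` are exchangeable and `U` is uniform on `[0,1]` and independent of them,
then `P(p ≤ α) ≤ α` for all `α ∈ [0,1]`, and moreover `p` is exactly uniform on
`[0,1]`. -/
theorem stmt11 {Ω : Type*} [MeasurableSpace Ω] (μ : Measure Ω) [IsProbabilityMeasure μ]
    (n : ℕ) (Z : Fin (n + 1) → Ω → ℝ) (U : Ω → ℝ)
    (hZ : ∀ i, Measurable (Z i)) (hU : Measurable U)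
    (hexch : ∀ π : Equiv.Perm (Fin (n + 1)),
      Measure.map (fun ω => fun i => Z (π i) ω) μ =
        Measure.map (fun ω => fun i => Z i ω) μ)
    (hUdist : Measure.map U μ = volume.restrict (Set.Icc (0 : ℝ) 1))
    (hindep : IndepFun (fun ω => fun i => Z i ω) U μ) :
    (∀ α ∈ Set.Icc (0 : ℝ) 1,
        μ {ω | confPValue n Z U ω ≤ α} ≤ ENNReal.ofReal α) ∧
      Measure.map (confPValue n Z U) μ = volume.restrict (Set.Icc (0 : ℝ) 1) := by
  have hZv : Measurable fun ω i => Z i ω := measurable_pi_lambda _ hZ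
  have hR : Measurable fun x : (Fin (n + 1) → ℝ) × ℝ =>
      randomizedRank x.1 (Fin.last n) x.2 / (n + 1) :=
    (measurable_randomizedRank _).div_const _
  have hp : confPValue n Z U =
      (fun x => randomizedRank x.1 (Fin.last n) x.2 / (n + 1)) ∘ fun ω => (fun i => Z i ω, U ω) :=
    funext (confPValue_eq_randomizedRank n Z U)
  have hpm : Measurable (confPValue n Z U) := by
    rw [hp]
    exact hR.comp (hZv.prodMk hU)
  have : IsProbabilityMeasure (μ.map fun ω i => Z i ω) :=
    Measure.isProbabilityMeasure_map hZv.aemeasurable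
  have hexch' : IsExchangeable (μ.map fun ω i => Z i ω) := fun π => by
    rw [Measure.map_map (by fun_prop) hZv]
    exact hexch π
  have hlaw : μ.map (confPValue n Z U) = volume.restrict (Set.Icc 0 1) := by
    have hrank := map_randomizedRank_div_card hexch' (Fin.last n)
    rw [Fintype.card_fin, Nat.cast_add, Nat.cast_one] at hrank
    rw [hp, ← Measure.map_map hR (hZv.prodMk hU),
      (indepFun_iff_map_prod_eq_prod_map_map hZv.aemeasurable hU.aemeasurable).1 hindep, hUdist,
      hrank]
  refine ⟨fun α hα => ?_, hlaw⟩
  change μ (confPValue n Z U ⁻¹' Set.Iic α) ≤ _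
  rw [← Measure.map_apply hpm measurableSet_Iic, hlaw, restrict_Icc_Iic, min_eq_left hα.2,
    min_eq_right hα.1, sub_zero]
end

section
/- Benjamini–Hochberg FDR control under independence: let p₁,…,p_m be p-values such that the p-values corresponding to true null hypotheses are mutually independent, independent of the false-null p-values, and each true-null p-value is super-uniform (P(p_j ≤ t) ≤ t for all t ∈ [0,1]). Apply the BH procedure at level α: let k = max{r : p_{(r)} ≤ αr/m} (k = 0 if no such r), and reject S = {j : p_j ≤ p_{(k)}}. Then FDR = E[V / max(1, R)] ≤ α·m₀/m ≤ α, where R = |S|, V = #{j ∈ S : H_j true}, and m₀ is the number of true nulls. -/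
open MeasureTheory ProbabilityTheory
open scoped Classical

/-- The number of rejections `k = max {r : p_(r) ≤ α r / m}` of the Benjamini–Hochberg
procedure at level `α`, expressed via the standard equivalence
`p_(r) ≤ t ↔ #{j : p j ≤ t} ≥ r` (with `k = 0` when no such `r` exists). -/
noncomputable def bhK (α : ℝ) (m : ℕ) (p : Fin m → ℝ) : ℕ :=
  sSup {r : ℕ | r ≤ m ∧ r ≤ (Finset.univ.filter fun j => p j ≤ α * r / m).card}

/-- The Benjamini–Hochberg rejection set `S = {j : p j ≤ α k / m}` at level `α`. -/
noncomputable def bhReject (α : ℝ) (m : ℕ) (p : Fin m → ℝ) : Finset (Fin m) :=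
  Finset.univ.filter fun j => p j ≤ α * (bhK α m p) / m

/-!
Write the false discovery proportion as a sum over the true nulls `j` of
`1{p_j ≤ α K_j / m} / K_j`, where `K_j` is the BH count after `p_j` is replaced by `0`:
if `p_j ≤ α K_j / m`, putting `p_j` back does not change the count, so this term is exactly
`1{j rejected} / max(1, R)`. As `K_j` is a function of the other p-values, it is independent of
`p_j`, and super-uniformity gives
`E[1{p_j ≤ c K_j} / K_j] = ∑ r, P(p_j ≤ c r) P(K_j = r) / r ≤ c` with `c = α / m`.
Summing over the `m₀` true nulls gives `α m₀ / m`.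
-/

namespace ProbabilityTheory

variable {Ω β γ δ : Type*} {mΩ : MeasurableSpace Ω} {mβ : MeasurableSpace β}
  {mγ : MeasurableSpace γ} {mδ : MeasurableSpace δ} {μ : Measure Ω}

theorem IndepFun.indepFun_prodMk_of_prodMk [IsFiniteMeasure μ] {X : Ω → β} {Y : Ω → γ}
    {Z : Ω → δ} (hX : Measurable X) (hY : Measurable Y) (hZ : Measurable Z)
    (hXY : IndepFun X Y μ) (hXYZ : IndepFun (fun ω => (X ω, Y ω)) Z μ) :
    IndepFun X (fun ω => (Y ω, Z ω)) μ := by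
  have hYZ : IndepFun Y Z μ := hXYZ.comp measurable_snd measurable_id
  rw [indepFun_iff_map_prod_eq_prod_map_map hX.aemeasurable hY.aemeasurable] at hXY
  rw [indepFun_iff_map_prod_eq_prod_map_map (hX.prodMk hY).aemeasurable hZ.aemeasurable,
    hXY] at hXYZ
  rw [indepFun_iff_map_prod_eq_prod_map_map hY.aemeasurable hZ.aemeasurable] at hYZ
  rw [indepFun_iff_map_prod_eq_prod_map_map hX.aemeasurable (hY.prodMk hZ).aemeasurable, hYZ,
    ← (measurePreserving_prodAssoc _ _ _).map_eq, ← hXYZ,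
    Measure.map_map MeasurableEquiv.prodAssoc.measurable ((hX.prodMk hY).prodMk hZ)]
  rfl

theorem iIndepFun.indepFun_update {ι : Type*} [DecidableEq ι] [IsProbabilityMeasure μ]
    {p : ι → Ω → β} {T : Finset ι} (hp : ∀ i, Measurable (p i))
    (hT : iIndepFun (fun i : T => p i) μ)
    (hTc : IndepFun (fun ω (i : T) => p i ω) (fun ω (i : {i // i ∉ T}) => p i ω) μ)
    {j : ι} (hj : j ∈ T) (c : β) :
    IndepFun (p j) (fun ω => Function.update (fun i => p i ω) j c) μ := by
  set j' : T := ⟨j, hj⟩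
  set S : Finset T := Finset.univ.erase j'
  let Y : Ω → S → β := fun ω i => p i ω
  let Z : Ω → {i // i ∉ T} → β := fun ω i => p i ω
  have hXY : IndepFun (p j) Y μ :=
    (hT.indepFun_finset {j'} S (Finset.disjoint_singleton_left.2 (Finset.notMem_erase j' _))
      fun i => hp i).comp
      (measurable_pi_apply (⟨j', Finset.mem_singleton_self j'⟩ : ({j'} : Finset T))) measurable_id
  have hXYZ : IndepFun (fun ω => (p j ω, Y ω)) Z μ :=
    hTc.comp ((measurable_pi_apply j').prodMk
      (measurable_pi_lambda _ fun i => measurable_pi_apply _)) measurable_id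
  let merge : (S → β) × ({i // i ∉ T} → β) → ι → β := fun uv i =>
    if hiT : i ∈ T then
      if hij : i = j then c
      else uv.1 ⟨⟨i, hiT⟩,
        Finset.mem_erase.2 ⟨fun h => hij (congrArg Subtype.val h), Finset.mem_univ _⟩⟩
    else uv.2 ⟨i, hiT⟩
  have hmerge : Measurable merge := by
    refine measurable_pi_lambda _ fun i => ?_
    unfold merge
    split_ifs
    · exact measurable_const
    · exact (measurable_pi_apply _).comp measurable_fst
    · exact (measurable_pi_apply _).comp measurable_snd
  have hupdate :
      (fun ω => Function.update (fun i => p i ω) j c) = merge ∘ fun ω => (Y ω, Z ω) := by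
    ext ω i
    rcases eq_or_ne i j with rfl | hij
    · simp [merge, hj]
    · by_cases hiT : i ∈ T <;> simp [merge, Y, Z, hij, hiT]
  rw [hupdate]
  exact (hXY.indepFun_prodMk_of_prodMk (hp j) (measurable_pi_lambda Y fun i => hp i)
    (measurable_pi_lambda Z fun i => hp i) hXYZ).comp measurable_id hmerge

end ProbabilityTheory

def SuperUniform {Ω : Type*} [MeasurableSpace Ω] (μ : Measure Ω) (X : Ω → ℝ) : Prop :=
  ∀ t ∈ Set.Icc (0 : ℝ) 1, μ {ω | X ω ≤ t} ≤ ENNReal.ofReal t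

section SuperUniform

variable {Ω : Type*} [MeasurableSpace Ω] {μ : Measure Ω} [IsProbabilityMeasure μ] {X : Ω → ℝ}

lemma SuperUniform.measureReal_le (hX : SuperUniform μ X) {t : ℝ} (ht : 0 ≤ t) :
    μ.real {ω | X ω ≤ t} ≤ t := by
  rcases le_or_gt t 1 with ht1 | ht1
  · exact ENNReal.toReal_le_of_le_ofReal ht (hX t ⟨ht, ht1⟩)
  · exact measureReal_le_one.trans ht1.le

-- On `{N = 0}` the integrand is `0⁻¹ = 0`, so no positivity of `N` is needed.
theorem SuperUniform.integral_ite_le_mul_inv_le (hXu : SuperUniform μ X) {N : Ω → ℕ} {n : ℕ}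
    {c : ℝ} (hX : Measurable X) (hN : Measurable N) (hXN : IndepFun X N μ) (hc : 0 ≤ c)
    (hNn : ∀ ω, N ω ≤ n) :
    ∫ ω, (if X ω ≤ c * N ω then (N ω : ℝ)⁻¹ else 0) ∂μ ≤ c := by
  set E : ℕ → Set Ω := fun r => {ω | X ω ≤ c * r} ∩ N ⁻¹' {r}
  have hE : ∀ r, MeasurableSet (E r) := fun r =>
    measurableSet_le hX measurable_const |>.inter (hN (measurableSet_singleton r))
  have hsplit : ∀ ω, (if X ω ≤ c * N ω then (N ω : ℝ)⁻¹ else 0) =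
      ∑ r ∈ Finset.range (n + 1), (E r).indicator (fun _ => (r : ℝ)⁻¹) ω := by
    intro ω
    rw [Finset.sum_eq_single_of_mem (N ω) (Finset.mem_range_succ_iff.2 (hNn ω))]
    · simp [E, Set.indicator_apply]
    · intro r _ hr
      simp [E, Ne.symm hr]
  have hterm : ∀ r : ℕ, μ.real (E r) • (r : ℝ)⁻¹ ≤ c * μ.real (N ⁻¹' {r}) := by
    intro r
    have hprod : μ.real (E r) = μ.real {ω | X ω ≤ c * r} * μ.real (N ⁻¹' {r}) := by
      simp only [measureReal_def, ← ENNReal.toReal_mul]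
      exact congrArg _ (hXN.measure_inter_preimage_eq_mul (Set.Iic _) _ measurableSet_Iic
        (measurableSet_singleton r))
    rw [hprod, smul_eq_mul]
    rcases Nat.eq_zero_or_pos r with rfl | hr
    · rw [Nat.cast_zero, inv_zero, mul_zero]; positivity
    calc μ.real {ω | X ω ≤ c * r} * μ.real (N ⁻¹' {r}) * (r : ℝ)⁻¹
        ≤ c * r * μ.real (N ⁻¹' {r}) * (r : ℝ)⁻¹ := by
          gcongr; exact hXu.measureReal_le (by positivity)
      _ = c * μ.real (N ⁻¹' {r}) := by field_simp
  calc ∫ ω, (if X ω ≤ c * N ω then (N ω : ℝ)⁻¹ else 0) ∂μ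
      = ∑ r ∈ Finset.range (n + 1), μ.real (E r) • (r : ℝ)⁻¹ := by
        simp_rw [hsplit]
        rw [integral_finsetSum _ fun r _ => (integrable_const _).indicator (hE r)]
        exact Finset.sum_congr rfl fun r _ => integral_indicator_const _ (hE r)
    _ ≤ ∑ r ∈ Finset.range (n + 1), c * μ.real (N ⁻¹' {r}) :=
        Finset.sum_le_sum fun r _ => hterm r
    _ = c * μ.real (N ⁻¹' Finset.range (n + 1)) := by
        rw [← Finset.mul_sum, sum_measureReal_preimage_singleton _
          fun r _ => hN (measurableSet_singleton r)]
    _ ≤ c := mul_le_of_le_one_right hc measureReal_le_one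

end SuperUniform

lemma integrable_ite_le_mul_inv {Ω : Type*} [MeasurableSpace Ω] {μ : Measure Ω}
    [IsFiniteMeasure μ] {X : Ω → ℝ} {N : Ω → ℕ} (hX : Measurable X) (hN : Measurable N) (c : ℝ) :
    Integrable (fun ω => if X ω ≤ c * N ω then (N ω : ℝ)⁻¹ else 0) μ := by
  have hmeas : Measurable fun ω => if X ω ≤ c * N ω then (N ω : ℝ)⁻¹ else 0 :=
    Measurable.ite (measurableSet_le hX (by fun_prop)) (by fun_prop) measurable_const
  refine Integrable.of_bound hmeas.aestronglyMeasurable 1 (ae_of_all _ fun ω => ?_)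
  split_ifs <;> simp [Nat.cast_inv_le_one]

section BHCount

variable {m : ℕ} {α : ℝ}

noncomputable def numLE (x : Fin m → ℝ) (t : ℝ) : ℕ :=
  (Finset.univ.filter fun j => x j ≤ t).card

lemma numLE_mono (x : Fin m → ℝ) : Monotone (numLE x) := fun _ _ hst =>
  Finset.card_le_card <| Finset.monotone_filter_right _ fun _ _ hj => hj.trans hst

lemma numLE_le (x : Fin m → ℝ) (t : ℝ) : numLE x t ≤ m :=
  (Finset.card_filter_le _ _).trans_eq (Finset.card_fin m)

lemma filter_update_zero_le (x : Fin m → ℝ) (j : Fin m) {t : ℝ} (ht : 0 ≤ t) :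
    (Finset.univ.filter fun i => Function.update x j 0 i ≤ t) =
      insert j (Finset.univ.filter fun i => x i ≤ t) := by
  ext i
  rcases eq_or_ne i j with rfl | hij <;> simp [*]

lemma numLE_le_numLE_update_zero (x : Fin m → ℝ) (j : Fin m) {t : ℝ} (ht : 0 ≤ t) :
    numLE x t ≤ numLE (Function.update x j 0) t := by
  rw [numLE, numLE, filter_update_zero_le x j ht]
  exact Finset.card_le_card (Finset.subset_insert _ _)

lemma numLE_update_zero_of_le (x : Fin m → ℝ) (j : Fin m) {t : ℝ} (ht : 0 ≤ t) (hxj : x j ≤ t) :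
    numLE (Function.update x j 0) t = numLE x t := by
  rw [numLE, numLE, filter_update_zero_le x j ht, Finset.insert_eq_of_mem (by simpa using hxj)]

lemma bhK_le_and_le_numLE (x : Fin m → ℝ) :
    bhK α m x ≤ m ∧ bhK α m x ≤ numLE x (α * bhK α m x / m) :=
  Nat.sSup_mem (s := {r | r ≤ m ∧ r ≤ numLE x (α * r / m)}) ⟨0, Nat.zero_le _, Nat.zero_le _⟩
    ⟨m, fun _ hr => hr.1⟩

lemma le_bhK {x : Fin m → ℝ} {r : ℕ} (hrm : r ≤ m) (hr : r ≤ numLE x (α * r / m)) :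
    r ≤ bhK α m x :=
  le_csSup ⟨m, fun _ hs => hs.1⟩ ⟨hrm, hr⟩

lemma le_bhK_iff {x : Fin m → ℝ} {r : ℕ} :
    r ≤ bhK α m x ↔ ∃ s, r ≤ s ∧ s ≤ m ∧ s ≤ numLE x (α * s / m) := by
  refine ⟨fun h => ⟨_, h, bhK_le_and_le_numLE x⟩, ?_⟩
  rintro ⟨s, hrs, hsm, hs⟩
  exact hrs.trans (le_bhK hsm hs)

lemma card_bhReject (hα : 0 ≤ α) (x : Fin m → ℝ) : (bhReject α m x).card = bhK α m x := by
  have hR : (bhReject α m x).card = numLE x (α * bhK α m x / m) := rfl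
  have hkR : bhK α m x ≤ (bhReject α m x).card := hR ▸ (bhK_le_and_le_numLE x).2
  refine le_antisymm (le_bhK (numLE_le x _) ?_) hkR
  exact numLE_mono x (show α * bhK α m x / m ≤ α * (bhReject α m x).card / m by gcongr)

lemma bhK_le_bhK_update_zero (hα : 0 ≤ α) (x : Fin m → ℝ) (j : Fin m) :
    bhK α m x ≤ bhK α m (Function.update x j 0) := by
  obtain ⟨hkm, hk⟩ := bhK_le_and_le_numLE (α := α) x
  exact le_bhK hkm (hk.trans (numLE_le_numLE_update_zero x j (by positivity)))

lemma bhK_update_zero_of_le (hα : 0 ≤ α) {x : Fin m → ℝ} {j : Fin m}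
    (hxj : x j ≤ α * bhK α m (Function.update x j 0) / m) :
    bhK α m (Function.update x j 0) = bhK α m x := by
  refine le_antisymm ?_ (bhK_le_bhK_update_zero hα x j)
  obtain ⟨hkm, hk⟩ := bhK_le_and_le_numLE (α := α) (Function.update x j 0)
  exact le_bhK hkm (numLE_update_zero_of_le x j (by positivity) hxj ▸ hk)

lemma measurable_numLE (t : ℝ) : Measurable fun x : Fin m → ℝ => numLE x t := by
  simp_rw [numLE, Finset.card_filter]
  exact Finset.measurable_sum _ fun j _ =>
    Measurable.ite (measurableSet_le (measurable_pi_apply j) measurable_const) measurable_const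
      measurable_const

lemma measurable_bhK : Measurable (bhK α m) := by
  refine measurable_of_Ici fun r => ?_
  have : bhK α m ⁻¹' Set.Ici r =
      ⋃ s, {x | r ≤ s ∧ s ≤ m} ∩ (fun x => numLE x (α * s / m)) ⁻¹' Set.Ici s := by
    ext x
    simp [le_bhK_iff, and_assoc]
  rw [this]
  exact MeasurableSet.iUnion fun s =>
    (MeasurableSet.const _).inter (measurable_numLE _ measurableSet_Ici)

lemma ite_le_bhK_update_zero (hα : 0 ≤ α) (x : Fin m → ℝ) (j : Fin m) :
    (if x j ≤ α / m * bhK α m (Function.update x j 0)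
      then (bhK α m (Function.update x j 0) : ℝ)⁻¹ else 0) =
      if j ∈ bhReject α m x then (bhK α m x : ℝ)⁻¹ else 0 := by
  have hmem : j ∈ bhReject α m x ↔ x j ≤ α * bhK α m x / m := by simp [bhReject]
  by_cases h : x j ≤ α / m * bhK α m (Function.update x j 0)
  · rw [← mul_div_right_comm] at h
    have hK := bhK_update_zero_of_le hα h
    rw [hK] at h ⊢
    rw [if_pos (by rwa [← mul_div_right_comm]), if_pos (hmem.2 h)]
  · have hj : j ∉ bhReject α m x := fun hj => h <| by
      rw [← mul_div_right_comm]
      exact (hmem.1 hj).trans (by gcongr; exact bhK_le_bhK_update_zero hα x j)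
    rw [if_neg h, if_neg hj]

lemma fdp_eq_sum_ite (hα : 0 ≤ α) (x : Fin m → ℝ) (T : Finset (Fin m)) :
    ((bhReject α m x ∩ T).card : ℝ) / ((max 1 (bhReject α m x).card : ℕ) : ℝ) =
      ∑ j ∈ T, if x j ≤ α / m * bhK α m (Function.update x j 0)
        then (bhK α m (Function.update x j 0) : ℝ)⁻¹ else 0 := by
  simp_rw [ite_le_bhK_update_zero hα x]
  rw [Finset.sum_ite_mem, Finset.sum_const, nsmul_eq_mul, Finset.inter_comm T, ← div_eq_mul_inv,
    card_bhReject hα]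
  rcases Nat.eq_zero_or_pos (bhK α m x) with hk | hk
  · have : bhReject α m x = ∅ := Finset.card_eq_zero.1 (hk ▸ card_bhReject hα x)
    simp [this]
  · rw [max_eq_right hk]

end BHCount

theorem stmt12_general {Ω : Type*} [MeasurableSpace Ω] (μ : Measure Ω) [IsProbabilityMeasure μ]
    (m : ℕ) (α : ℝ) (hα0 : 0 ≤ α)
    (p : Fin m → Ω → ℝ) (hmeas : ∀ j, Measurable (p j))
    (T : Finset (Fin m))
    (hiid : iIndepFun (fun j : T => p j) μ)
    (hindep : IndepFun (fun ω => fun j : T => p (j : Fin m) ω)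
      (fun ω => fun j : {j : Fin m // j ∉ T} => p (j : Fin m) ω) μ)
    (hsup : ∀ j ∈ T, ∀ t ∈ Set.Icc (0 : ℝ) 1,
      μ {ω | p j ω ≤ t} ≤ ENNReal.ofReal t) :
    (∫ ω, (((bhReject α m (fun j => p j ω) ∩ T).card : ℝ) /
        ((max 1 (bhReject α m (fun j => p j ω)).card : ℕ) : ℝ)) ∂μ) ≤
        α * T.card / m ∧
      α * T.card / m ≤ α := by
  set K : Fin m → Ω → ℕ := fun j ω => bhK α m (Function.update (fun i => p i ω) j 0)
  have hK : ∀ j, Measurable (K j) := fun j =>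
    measurable_bhK.comp (measurable_update_left.comp (measurable_pi_lambda _ hmeas))
  have hterm : ∀ j ∈ T,
      ∫ ω, (if p j ω ≤ α / m * K j ω then (K j ω : ℝ)⁻¹ else 0) ∂μ ≤ α / m := fun j hj =>
    SuperUniform.integral_ite_le_mul_inv_le (hsup j hj) (hmeas j) (hK j)
      ((hiid.indepFun_update hmeas hindep hj 0).comp measurable_id measurable_bhK)
      (by positivity) fun _ => (bhK_le_and_le_numLE _).1
  refine ⟨?_, div_le_of_le_mul₀ m.cast_nonneg hα0 ?_⟩
  · calc _ = ∑ j ∈ T, ∫ ω, (if p j ω ≤ α / m * K j ω then (K j ω : ℝ)⁻¹ else 0) ∂μ := by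
          simp_rw [fdp_eq_sum_ite hα0]
          exact integral_finsetSum _ fun j _ => integrable_ite_le_mul_inv (hmeas j) (hK j) _
      _ ≤ ∑ _ ∈ T, α / m := Finset.sum_le_sum hterm
      _ = α * T.card / m := by rw [Finset.sum_const, nsmul_eq_mul]; ring
  · have hTm : (T.card : ℝ) ≤ m := by exact_mod_cast T.card_le_univ.trans_eq (Fintype.card_fin m)
    exact mul_le_mul_of_nonneg_left hTm hα0

/-- Benjamini–Hochberg FDR control under independence: if the true-null p-values
(indexed by `T`) are mutually independent, independent of the false-null p-values, and
each is super-uniform, then the BH procedure at level `α` satisfies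
`FDR = E[V / max(1, R)] ≤ α m₀ / m ≤ α`. -/
theorem stmt12 {Ω : Type*} [MeasurableSpace Ω] (μ : Measure Ω) [IsProbabilityMeasure μ]
    (m : ℕ) (hm : 0 < m) (α : ℝ) (hα0 : 0 ≤ α) (hα1 : α ≤ 1)
    (p : Fin m → Ω → ℝ) (hmeas : ∀ j, Measurable (p j))
    (hrange : ∀ j ω, p j ω ∈ Set.Icc (0 : ℝ) 1)
    (T : Finset (Fin m))
    (hiid : iIndepFun (fun j : T => p j) μ)
    (hindep : IndepFun (fun ω => fun j : T => p (j : Fin m) ω)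
      (fun ω => fun j : {j : Fin m // j ∉ T} => p (j : Fin m) ω) μ)
    (hsup : ∀ j ∈ T, ∀ t ∈ Set.Icc (0 : ℝ) 1,
      μ {ω | p j ω ≤ t} ≤ ENNReal.ofReal t) :
    (∫ ω, (((bhReject α m (fun j => p j ω) ∩ T).card : ℝ) /
        ((max 1 (bhReject α m (fun j => p j ω)).card : ℕ) : ℝ)) ∂μ) ≤
        α * T.card / m ∧
      α * T.card / m ≤ α :=
  stmt12_general μ m α hα0 p hmeas T hiid hindep hsup
end
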